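/- Consider the triple {0} ⊆ so(3) ⊆ so(4), with so(3) embedded as x ↦ diag(x,0). Then the fatness coindex of this triple equals 1: for every nonzero y ∈ so(3) the centralizer of y in 𝔭 = so(3)^⊥ ⊂ so(4) is 1-dimensional, and for every nonzero x ∈ 𝔭 the centralizer of x in so(3) is 1-dimensional. -/

import Mathlib

open scoped Matrix

attribute [local instance] LieRing.ofAssociativeRing

/-- The centralizer of `x` in a subspace `a` of a Lie algebra:
`Z_a(x) = {y ∈ a : ⁅x, y⁆ = 0}`. -/
def centralizerIn {L : Type*} [LieRing L] [LieAlgebra ℝ L]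
    (a : Submodule ℝ L) (x : L) : Submodule ℝ L where
  carrier := {y | y ∈ a ∧ ⁅x, y⁆ = 0}
  add_mem' := by
    rintro y z ⟨hy, hy'⟩ ⟨hz, hz'⟩
    exact ⟨a.add_mem hy hz, by rw [lie_add, hy', hz', add_zero]⟩
  zero_mem' := ⟨a.zero_mem, lie_zero x⟩
  smul_mem' := by
    rintro c y ⟨hy, hy'⟩
    exact ⟨a.smul_mem c hy, by rw [lie_smul, hy', smul_zero]⟩

/-- For `z ∈ ℝᵏ`, the skew-symmetric matrix `M(z) ∈ so(k+1)` whose last column is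
`(z₁, …, z_k, 0)ᵀ`, whose last row is `(−z₁, …, −z_k, 0)`, and with zeros elsewhere. -/
def Mvec {k : ℕ} (z : Fin k → ℝ) : Matrix (Fin (k + 1)) (Fin (k + 1)) ℝ :=
  Matrix.of fun i j =>
    if hi : (i : ℕ) < k then
      if hj : (j : ℕ) < k then 0 else z ⟨i, hi⟩
    else
      if hj : (j : ℕ) < k then -z ⟨j, hj⟩ else 0

/-- `Mvec` as a linear map. -/
def MvecL (k : ℕ) : (Fin k → ℝ) →ₗ[ℝ] Matrix (Fin (k + 1)) (Fin (k + 1)) ℝ where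
  toFun := Mvec
  map_add' z w := by
    funext i j
    simp only [Mvec, Matrix.of_apply, Matrix.add_apply, Pi.add_apply]
    split_ifs <;> simp <;> ring
  map_smul' c z := by
    funext i j
    simp only [Mvec, Matrix.of_apply, Matrix.smul_apply, Pi.smul_apply, RingHom.id_apply,
      smul_eq_mul]
    split_ifs <;> simp [mul_comm]

/-- The block-diagonal embedding `A ↦ diag(A, 0)` of `k × k` matrices into
`(k+1) × (k+1)` matrices. -/
def embedM {k : ℕ} (A : Matrix (Fin k) (Fin k) ℝ) : Matrix (Fin (k + 1)) (Fin (k + 1)) ℝ :=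
  Matrix.of fun i j =>
    if hi : (i : ℕ) < k then
      if hj : (j : ℕ) < k then A ⟨i, hi⟩ ⟨j, hj⟩ else 0
    else 0

/-- `embedM` as a linear map. -/
def embedL (k : ℕ) : Matrix (Fin k) (Fin k) ℝ →ₗ[ℝ] Matrix (Fin (k + 1)) (Fin (k + 1)) ℝ where
  toFun := embedM
  map_add' A C := by
    funext i j
    simp only [embedM, Matrix.of_apply, Matrix.add_apply]
    split_ifs <;> simp
  map_smul' c A := by
    funext i j
    simp only [embedM, Matrix.of_apply, Matrix.smul_apply, RingHom.id_apply, smul_eq_mul]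
    split_ifs <;> simp

/-- The space of skew-symmetric real `k × k` matrices, i.e. `so(k)`. -/
def skewSubmodule (k : ℕ) : Submodule ℝ (Matrix (Fin k) (Fin k) ℝ) where
  carrier := {A | Aᵀ = -A}
  add_mem' := by
    intro A C hA hC
    simp only [Set.mem_setOf_eq] at *
    rw [Matrix.transpose_add, hA, hC, neg_add]
  zero_mem' := by simp
  smul_mem' := by
    intro c A hA
    simp only [Set.mem_setOf_eq] at *
    rw [Matrix.transpose_smul, hA, smul_neg]


/-!
For skew `A`, the bracket of `diag(A, 0)` with `M(z)` is `M(A z)`. Writing an element of `so(3)`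
as the cross-product matrix `z ↦ w ⨯₃ z`, both centralizers are therefore cut out by the equation
`w ⨯₃ z = 0`, whose solutions for a fixed nonzero `w` (resp. `z`) form the line through it.
-/

section Embedding

variable {k : ℕ}

@[simp]
lemma MvecL_apply (z : Fin k → ℝ) : MvecL k z = Mvec z := rfl

@[simp]
lemma embedL_apply (A : Matrix (Fin k) (Fin k) ℝ) : embedL k A = embedM A := rfl

@[simp]
lemma Mvec_castSucc_castSucc (z : Fin k → ℝ) (i j : Fin k) :
    Mvec z i.castSucc j.castSucc = 0 := by
  simp [Mvec]

@[simp]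
lemma Mvec_castSucc_last (z : Fin k → ℝ) (i : Fin k) : Mvec z i.castSucc (Fin.last k) = z i := by
  simp [Mvec]

@[simp]
lemma Mvec_last_castSucc (z : Fin k → ℝ) (j : Fin k) : Mvec z (Fin.last k) j.castSucc = -z j := by
  simp [Mvec]

@[simp]
lemma Mvec_last_last (z : Fin k → ℝ) : Mvec z (Fin.last k) (Fin.last k) = 0 := by
  simp [Mvec]

@[simp]
lemma embedM_castSucc_castSucc (A : Matrix (Fin k) (Fin k) ℝ) (i j : Fin k) :
    embedM A i.castSucc j.castSucc = A i j := by
  simp [embedM]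

@[simp]
lemma embedM_castSucc_last (A : Matrix (Fin k) (Fin k) ℝ) (i : Fin k) :
    embedM A i.castSucc (Fin.last k) = 0 := by
  simp [embedM]

@[simp]
lemma embedM_last (A : Matrix (Fin k) (Fin k) ℝ) (j : Fin (k + 1)) :
    embedM A (Fin.last k) j = 0 := by
  simp [embedM]

lemma MvecL_injective : Function.Injective (MvecL k) := fun z w h ↦
  funext fun i ↦ by simpa using congrFun (congrFun h i.castSucc) (Fin.last k)

lemma embedL_injective : Function.Injective (embedL k) := fun A C h ↦
  funext fun i ↦ funext fun j ↦ by simpa using congrFun (congrFun h i.castSucc) j.castSucc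

lemma lie_embedM_Mvec {A : Matrix (Fin k) (Fin k) ℝ} (hA : Aᵀ = -A) (z : Fin k → ℝ) :
    ⁅embedM A, Mvec z⁆ = Mvec (A *ᵥ z) := by
  ext i j
  induction i using Fin.lastCases <;> induction j using Fin.lastCases <;>
    simp [Ring.lie_def, Matrix.mul_apply, Fin.sum_univ_castSucc, Matrix.mulVec, dotProduct]
  -- only the last row is left: it is `-(Aᵀ z)ᵀ`, which needs skewness
  rw [← Finset.sum_neg_distrib]
  refine Finset.sum_congr rfl fun l _ ↦ ?_
  rw [← Matrix.transpose_apply A, hA, Matrix.neg_apply]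
  ring

lemma lie_embedM_Mvec_eq_zero_iff {A : Matrix (Fin k) (Fin k) ℝ} (hA : Aᵀ = -A) (z : Fin k → ℝ) :
    ⁅embedM A, Mvec z⁆ = 0 ↔ A *ᵥ z = 0 := by
  rw [lie_embedM_Mvec hA, ← MvecL_apply, ← map_zero (MvecL k), MvecL_injective.eq_iff]


lemma centralizerIn_range_MvecL {A : Matrix (Fin k) (Fin k) ℝ} (hA : Aᵀ = -A) :
    centralizerIn (LinearMap.range (MvecL k)) (embedM A) =
      (LinearMap.ker A.mulVecLin).map (MvecL k) := by
  ext x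
  constructor
  · rintro ⟨⟨z, rfl⟩, hcomm⟩
    exact ⟨z, (lie_embedM_Mvec_eq_zero_iff hA z).1 hcomm, rfl⟩
  · rintro ⟨z, hz, rfl⟩
    exact ⟨⟨z, rfl⟩, (lie_embedM_Mvec_eq_zero_iff hA z).2 hz⟩

end Embedding

lemma ker_crossProduct {F : Type*} [Field F] {w : Fin 3 → F} (hw : w ≠ 0) :
    LinearMap.ker (crossProduct w) = F ∙ w := by
  ext z
  rw [LinearMap.mem_ker, Submodule.mem_span_singleton, ← not_ne_iff,
    crossProduct_ne_zero_iff_linearIndependent, LinearIndependent.pair_iff' hw, not_forall_not]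

def crossMatrix : (Fin 3 → ℝ) →ₗ[ℝ] Matrix (Fin 3) (Fin 3) ℝ :=
  LinearMap.toMatrix'.toLinearMap ∘ₗ crossProduct

lemma crossMatrix_apply (w : Fin 3 → ℝ) :
    crossMatrix w = !![0, -w 2, w 1; w 2, 0, -w 0; -w 1, w 0, 0] := by
  ext i j
  fin_cases i <;> fin_cases j <;> simp [crossMatrix, LinearMap.toMatrix'_apply, cross_apply]

lemma crossMatrix_mulVec (w z : Fin 3 → ℝ) : crossMatrix w *ᵥ z = w ⨯₃ z :=
  LinearMap.toMatrix'_mulVec _ z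

lemma transpose_crossMatrix (w : Fin 3 → ℝ) : (crossMatrix w)ᵀ = -crossMatrix w := by
  ext i j
  fin_cases i <;> fin_cases j <;> simp [crossMatrix_apply]

lemma crossMatrix_injective : Function.Injective crossMatrix := fun v w h ↦ by
  have h21 := congrFun (congrFun h 2) 1
  have h02 := congrFun (congrFun h 0) 2
  have h10 := congrFun (congrFun h 1) 0
  simp only [crossMatrix_apply] at h21 h02 h10
  ext i
  fin_cases i <;> simp_all

lemma range_crossMatrix : LinearMap.range crossMatrix = skewSubmodule 3 := by
  refine le_antisymm ?_ fun A (hA : Aᵀ = -A) ↦ ⟨![A 2 1, A 0 2, A 1 0], ?_⟩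
  · rintro _ ⟨w, rfl⟩
    exact transpose_crossMatrix w
  · have h := fun i j ↦ congrFun (congrFun hA i) j
    simp only [Matrix.transpose_apply, Matrix.neg_apply] at h
    ext i j
    fin_cases i <;> fin_cases j <;> simp [crossMatrix_apply] <;>
      linarith [h 0 0, h 1 1, h 2 2, h 0 1, h 0 2, h 1 2]

lemma mulVecLin_crossMatrix (w : Fin 3 → ℝ) : (crossMatrix w).mulVecLin = crossProduct w :=
  LinearMap.ext (crossMatrix_mulVec w)

lemma centralizerIn_range_MvecL_embedM_crossMatrix {w : Fin 3 → ℝ} (hw : w ≠ 0) :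
    centralizerIn (LinearMap.range (MvecL 3)) (embedM (crossMatrix w)) = ℝ ∙ Mvec w := by
  rw [centralizerIn_range_MvecL (transpose_crossMatrix w), mulVecLin_crossMatrix,
    ker_crossProduct hw, Submodule.map_span, Set.image_singleton, MvecL_apply]

lemma centralizerIn_map_embedL_Mvec {z : Fin 3 → ℝ} (hz : z ≠ 0) :
    centralizerIn ((skewSubmodule 3).map (embedL 3)) (Mvec z) = ℝ ∙ embedM (crossMatrix z) := by
  have hcomm_iff : ∀ w, ⁅Mvec z, embedM (crossMatrix w)⁆ = 0 ↔ z ⨯₃ w = 0 := fun w ↦ by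
    rw [← lie_skew, neg_eq_zero, lie_embedM_Mvec_eq_zero_iff (transpose_crossMatrix w),
      crossMatrix_mulVec, ← cross_anticomm, neg_eq_zero]
  ext x
  rw [Submodule.mem_span_singleton]
  constructor
  · rintro ⟨⟨A, hA, rfl⟩, hcomm⟩
    obtain ⟨w, rfl⟩ : A ∈ LinearMap.range crossMatrix := range_crossMatrix ▸ hA
    have hw : w ∈ ℝ ∙ z := by
      rw [← ker_crossProduct hz, LinearMap.mem_ker, ← hcomm_iff]
      exact hcomm
    obtain ⟨c, rfl⟩ := Submodule.mem_span_singleton.1 hw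
    exact ⟨c, by simp⟩
  · rintro ⟨c, rfl⟩
    refine ⟨⟨crossMatrix (c • z), range_crossMatrix ▸ ⟨_, rfl⟩, by simp⟩, ?_⟩
    rw [lie_smul, (hcomm_iff z).2 (cross_self z), smul_zero]

/-- Consider the triple `{0} ⊆ so(3) ⊆ so(4)`, with `so(3)` embedded
as `x ↦ diag(x, 0)`.  The fatness coindex of this triple equals `1`: for every
nonzero `y ∈ 𝔪 = so(3)` the centralizer of `y` in `𝔭 = so(3)ᗮ = {M(z) : z ∈ ℝ³}` is
`1`-dimensional, and for every nonzero `x ∈ 𝔭` the centralizer of `x` in `so(3)` is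
`1`-dimensional. -/
theorem stmt4
    (p mm : Submodule ℝ (Matrix (Fin 4) (Fin 4) ℝ))
    (hp : p = LinearMap.range (MvecL 3))
    (hmm : mm = Submodule.map (embedL 3) (skewSubmodule 3)) :
    (∀ y ∈ mm, y ≠ 0 → Module.finrank ℝ (centralizerIn p y) = 1) ∧
    (∀ x ∈ p, x ≠ 0 → Module.finrank ℝ (centralizerIn mm x) = 1) := by
  subst hp hmm
  constructor
  · rintro _ ⟨A, hA, rfl⟩ hy
    obtain ⟨w, rfl⟩ : A ∈ LinearMap.range crossMatrix := range_crossMatrix ▸ hA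
    have hw : w ≠ 0 := by
      rintro rfl
      exact hy (by rw [map_zero, map_zero])
    rw [embedL_apply, centralizerIn_range_MvecL_embedM_crossMatrix hw]
    exact finrank_span_singleton ((map_ne_zero_iff _ MvecL_injective).2 hw)
  · rintro _ ⟨z, rfl⟩ hx
    have hz : z ≠ 0 := by
      rintro rfl
      exact hx (map_zero _)
    rw [MvecL_apply, centralizerIn_map_embedL_Mvec hz]
    have hinj : Function.Injective (embedL 3 ∘ₗ crossMatrix) :=
      embedL_injective.comp crossMatrix_injective
    exact finrank_span_singleton ((map_ne_zero_iff _ hinj).2 hz)
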